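/- Let U ⊆ A^{ℤ²} be a nonempty additive shift space. If h_r(U) = (1/(mn)) log Γ_{m×n}(U) for some m,n ≥ 1, then U is a full shift, i.e., U = B^{ℤ²} for some subset B ⊆ A. In particular, if U is not a full shift, then h_r(U) < (1/(mn)) log Γ_{m×n}(U) for every m,n ≥ 1. -/

import Mathlib

open Filter
open scoped Classical

/-- The `m × n` rectangular lattice `Z_{m×n}(p)` with bottom-left corner `p`. -/
def Zrect (m n : ℕ) (p : ℤ × ℤ) : Finset (ℤ × ℤ) :=
  (Finset.range m ×ˢ Finset.range n).image (fun ab => (p.1 + (ab.1 : ℤ), p.2 + (ab.2 : ℤ)))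

/-- The number of patterns of `U` seen on the finite window `L`. -/
noncomputable def patternCount {A : Type*} (U : Set ((ℤ × ℤ) → A)) (L : Finset (ℤ × ℤ)) : ℕ :=
  Set.ncard ((fun x => fun p : L => x (p : ℤ × ℤ)) '' U)

/-- An additive shift space: nonempty, closed, translation invariant. -/
def IsShiftSpace {A : Type*} [TopologicalSpace A] (U : Set ((ℤ × ℤ) → A)) : Prop :=
  U.Nonempty ∧ IsClosed U ∧ ∀ v : ℤ × ℤ, ∀ x ∈ U, (fun p => x (p + v)) ∈ U

/-- An expanding system of finite sublattices of `ℤ²`. -/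
def IsExpandingSystem (Ω : ℕ → Finset (ℤ × ℤ)) : Prop :=
  (∀ n, Ω n ⊂ Ω (n + 1)) ∧ ∀ p : ℤ × ℤ, ∃ n, p ∈ Ω n

/-- The interior of a finite lattice. -/
def latInterior (L : Finset (ℤ × ℤ)) : Finset (ℤ × ℤ) :=
  L.filter (fun p => (p.1 + 1, p.2) ∈ L ∧ (p.1, p.2 + 1) ∈ L ∧ (p.1 + 1, p.2 + 1) ∈ L)

/-- The boundary of a finite lattice. -/
def latBoundary (L : Finset (ℤ × ℤ)) : Finset (ℤ × ℤ) := L \ latInterior L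

/-- The rectangular entropy `h_r(U)`. -/
noncomputable def rectEntropy {A : Type*} (U : Set ((ℤ × ℤ) → A)) : ℝ :=
  ⨅ mn : ℕ × ℕ, (1 / (((mn.1 + 1) * (mn.2 + 1) : ℕ) : ℝ)) *
    Real.log (patternCount U (Zrect (mn.1 + 1) (mn.2 + 1) (0, 0)))

/-- The entropy `h_Ω(U)` along an expanding system `Ω`. -/
noncomputable def entropyAlong {A : Type*} (U : Set ((ℤ × ℤ) → A)) (Ω : ℕ → Finset (ℤ × ℤ)) : ℝ :=
  Filter.limsup (fun n => (1 / ((Ω n).card : ℝ)) * Real.log (patternCount U (Ω n))) Filter.atTop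

/-- `Ω_{k,l}(n)`: the union of grid rectangles `Z_{k×l}((ak,bl))` contained in `L`. -/
noncomputable def gridPart (k l : ℕ) (L : Finset (ℤ × ℤ)) : Finset (ℤ × ℤ) :=
  L.filter (fun p => ∃ a b : ℤ,
    p ∈ Zrect k l ((k : ℤ) * a, (l : ℤ) * b) ∧ Zrect k l ((k : ℤ) * a, (l : ℤ) * b) ⊆ L)

/-- `β_{k,l}` : the size of the complement of the grid part. -/
noncomputable def betaKL (k l : ℕ) (L : Finset (ℤ × ℤ)) : ℕ := (L \ gridPart k l L).card

/-- `α_{k,l}` : the number of grid rectangles contained in `L`. -/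
noncomputable def alphaKL (k l : ℕ) (L : Finset (ℤ × ℤ)) : ℕ :=
  Set.ncard {ab : ℤ × ℤ | Zrect k l ((k : ℤ) * ab.1, (l : ℤ) * ab.2) ⊆ L}

/-- A tessellation of `ℤ²`. -/
def IsTessellation (T : Finset (ℤ × ℤ)) : Prop :=
  ∃ v : ℕ → ℤ × ℤ,
    (∀ i j : ℕ, i ≠ j → Disjoint (T.image (· + v i)) (T.image (· + v j))) ∧
    ∀ p : ℤ × ℤ, ∃ i : ℕ, p ∈ T.image (· + v i)

/-- Euclidean distance between points of `ℤ²`. -/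
noncomputable def euclDist (p q : ℤ × ℤ) : ℝ :=
  Real.sqrt (((p.1 - q.1 : ℤ) : ℝ) ^ 2 + ((p.2 - q.2 : ℤ) : ℝ) ^ 2)

/-- Block gluing with gap `M`. -/
def BlockGluingWithGap {A : Type*} (U : Set ((ℤ × ℤ) → A)) (M : ℕ) : Prop :=
  ∀ (m₁ n₁ m₂ n₂ : ℕ) (c₁ c₂ : ℤ × ℤ),
    (∀ p ∈ Zrect m₁ n₁ c₁, ∀ q ∈ Zrect m₂ n₂ c₂, (M : ℝ) ≤ euclDist p q) →
    ∀ x₁ ∈ U, ∀ x₂ ∈ U, ∃ x ∈ U,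
      (∀ p ∈ Zrect m₁ n₁ c₁, x p = x₁ p) ∧ ∀ q ∈ Zrect m₂ n₂ c₂, x q = x₂ q

/-- Block gluing. -/
def IsBlockGluing {A : Type*} (U : Set ((ℤ × ℤ) → A)) : Prop :=
  ∃ M : ℕ, 1 ≤ M ∧ BlockGluingWithGap U M

/-- A full shift on a sub-alphabet. -/
def IsFullShift {A : Type*} (U : Set ((ℤ × ℤ) → A)) : Prop :=
  ∃ B : Set A, U = {x | ∀ p : ℤ × ℤ, x p ∈ B}

/-- Shift of finite type. -/
def IsSFT {A : Type*} (U : Set ((ℤ × ℤ) → A)) : Prop :=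
  ∃ (F : Finset (ℤ × ℤ)) (P : Set (F → A)),
    U = {x | ∀ v : ℤ × ℤ, (fun p : F => x (v + (p : ℤ × ℤ))) ∈ P}

/-- `(i,j)` has horizontal length `m` in `L`. -/
def HasHorizLength (L : Finset (ℤ × ℤ)) (p : ℤ × ℤ) (m : ℕ) : Prop :=
  1 ≤ m ∧ (∃ c : ℤ × ℤ, p ∈ Zrect m 1 c ∧ Zrect m 1 c ⊆ L) ∧
    ∀ m' : ℕ, m < m' → ¬ ∃ c : ℤ × ℤ, p ∈ Zrect m' 1 c ∧ Zrect m' 1 c ⊆ L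

/-- `(i,j)` has vertical length `m` in `L`. -/
def HasVertLength (L : Finset (ℤ × ℤ)) (p : ℤ × ℤ) (m : ℕ) : Prop :=
  1 ≤ m ∧ (∃ c : ℤ × ℤ, p ∈ Zrect 1 m c ∧ Zrect 1 m c ⊆ L) ∧
    ∀ m' : ℕ, m < m' → ¬ ∃ c : ℤ × ℤ, p ∈ Zrect 1 m' c ∧ Zrect 1 m' c ⊆ L

noncomputable def betaHoriz (m : ℕ) (L : Finset (ℤ × ℤ)) : ℕ :=
  (L.filter (fun p => HasHorizLength L p m)).card

noncomputable def betaVert (m : ℕ) (L : Finset (ℤ × ℤ)) : ℕ :=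
  (L.filter (fun p => HasVertLength L p m)).card

/-- The one-dimensional sublattice segment `{s • v : 0 ≤ s ≤ n-1}`. -/
def lineSegment (v : ℤ × ℤ) (n : ℕ) : Finset (ℤ × ℤ) :=
  (Finset.range n).image (fun s : ℕ => ((s : ℤ) * v.1, (s : ℤ) * v.2))

/-- The projectional entropy along the one-dimensional sublattice generated by `v`. -/
noncomputable def projEntropy {A : Type*} (U : Set ((ℤ × ℤ) → A)) (v : ℤ × ℤ) : ℝ :=
  ⨅ n : ℕ, (1 / (n + 1 : ℝ)) * Real.log (patternCount U (lineSegment v (n + 1)))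

/-- `ĥ⁽¹⁾(U)`: supremum of projectional entropies over one-dimensional sublattices. -/
noncomputable def hHatOne {A : Type*} (U : Set ((ℤ × ℤ) → A)) : ℝ :=
  ⨆ v : {w : ℤ × ℤ // w ≠ 0}, projEntropy U (v : ℤ × ℤ)

/-- The horizontal golden-mean shift. -/
def goldenMeanShift : Set ((ℤ × ℤ) → Fin 2) :=
  {x | ∀ p : ℤ × ℤ, x p * x (p.1 + 1, p.2) = 0}

/-- The sequence `a_k`: `a_1 = 2`, `a_2 = 3`, `a_k = a_{k-1} + a_{k-2}`. -/
def aSeq : ℕ → ℕ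
  | 0 => 1
  | 1 => 2
  | (k + 2) => aSeq (k + 1) + aSeq k

/-!
Let `h = h_r(U)` and suppose `log Γ_{m×n}(U) = mn h`. Since also `log Γ_{2m×n}(U) ≥ 2mn h`, the
subadditive bound `Γ_{2m×n} ≤ Γ_{m×n}²` is an equality: any two patterns on the adjacent rectangles
`R = Z_{m×n}` and `R' = Z_{m×n}((m,0))` glue to a point of `U`. The rectangle `Z_{m×n}((s,0))` is
the union of an `(m-s)×n` piece of `R` and an `s×n` piece of `R'`, so
`log Γ_{(m-s)×n} + log Γ_{s×n} ≤ log Γ_{m×n} = mn h`; as each term is at least its area times `h`,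
the `s×n` rectangle attains `h` as well. Shrinking both sides (the second one after transposing `U`)
gives `h = log Γ_{1×1}(U) = log |B|`, with `B` the set of symbols occurring in `U`. Hence
`Γ_{k×l}(U) ≥ |B|^{kl}`, i.e. every `B`-valued pattern on a rectangle occurs in `U`, and `U`, being
closed, equals `B^{ℤ²}`.
-/

section ShiftSpaces

variable {A : Type*}

def IsShiftInvariant (U : Set ((ℤ × ℤ) → A)) : Prop :=
  ∀ v : ℤ × ℤ, ∀ x ∈ U, (fun p => x (p + v)) ∈ U

theorem IsShiftSpace.isShiftInvariant [TopologicalSpace A] {U : Set ((ℤ × ℤ) → A)}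
    (hU : IsShiftSpace U) : IsShiftInvariant U :=
  hU.2.2

def patterns (U : Set ((ℤ × ℤ) → A)) (L : Finset (ℤ × ℤ)) : Set (L → A) :=
  (fun x => fun p : L => x (p : ℤ × ℤ)) '' U

section Patterns

variable {U : Set ((ℤ × ℤ) → A)}

theorem patternCount_eq_ncard (U : Set ((ℤ × ℤ) → A)) (L : Finset (ℤ × ℤ)) :
    patternCount U L = (patterns U L).ncard :=
  rfl

theorem one_le_patternCount [Finite A] (hne : U.Nonempty) (L : Finset (ℤ × ℤ)) :
    1 ≤ patternCount U L :=
  (Set.ncard_pos (Set.toFinite _)).2 (hne.image _)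

def restrictPair (L₁ L₂ : Finset (ℤ × ℤ)) (f : (L₁ ∪ L₂ : Finset (ℤ × ℤ)) → A) :
    (L₁ → A) × (L₂ → A) :=
  (fun p => f ⟨p, Finset.mem_union_left _ p.2⟩, fun p => f ⟨p, Finset.mem_union_right _ p.2⟩)

theorem restrictPair_injective (L₁ L₂ : Finset (ℤ × ℤ)) :
    Function.Injective (restrictPair (A := A) L₁ L₂) := by
  intro f g hfg
  funext ⟨q, hq⟩
  rcases Finset.mem_union.1 hq with h | h
  · exact congrFun (congrArg Prod.fst hfg) ⟨q, h⟩
  · exact congrFun (congrArg Prod.snd hfg) ⟨q, h⟩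

theorem restrictPair_mem_patterns {L₁ L₂ : Finset (ℤ × ℤ)} {f : (L₁ ∪ L₂ : Finset _) → A}
    (hf : f ∈ patterns U (L₁ ∪ L₂)) :
    restrictPair L₁ L₂ f ∈ patterns U L₁ ×ˢ patterns U L₂ := by
  obtain ⟨x, hx, rfl⟩ := hf
  exact ⟨⟨x, hx, rfl⟩, ⟨x, hx, rfl⟩⟩

theorem patternCount_union_le [Finite A] (U : Set ((ℤ × ℤ) → A)) (L₁ L₂ : Finset (ℤ × ℤ)) :
    patternCount U (L₁ ∪ L₂) ≤ patternCount U L₁ * patternCount U L₂ := by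
  rw [patternCount_eq_ncard, patternCount_eq_ncard, patternCount_eq_ncard, ← Set.ncard_prod]
  exact Set.ncard_le_ncard_of_injOn _ (fun f hf => restrictPair_mem_patterns hf)
    (restrictPair_injective L₁ L₂).injOn

theorem exists_glue_of_patternCount_union_eq_mul [Finite A] {K K' : Finset (ℤ × ℤ)}
    (h : patternCount U (K ∪ K') = patternCount U K * patternCount U K') :
    ∀ x₁ ∈ U, ∀ x₂ ∈ U, ∃ x ∈ U, Set.EqOn x x₁ K ∧ Set.EqOn x x₂ K' := by
  intro x₁ hx₁ x₂ hx₂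
  have himage : restrictPair K K' '' patterns U (K ∪ K') = patterns U K ×ˢ patterns U K' := by
    apply Set.eq_of_subset_of_ncard_le
    · rintro _ ⟨f, hf, rfl⟩
      exact restrictPair_mem_patterns hf
    · rw [Set.ncard_image_of_injective _ (restrictPair_injective K K'), Set.ncard_prod]
      exact h.ge
    · exact Set.toFinite _
  obtain ⟨_, ⟨x, hx, rfl⟩, hpair⟩ : (fun p : K => x₁ p, fun p : K' => x₂ p) ∈
      restrictPair K K' '' patterns U (K ∪ K') := by
    rw [himage]
    exact ⟨⟨x₁, hx₁, rfl⟩, ⟨x₂, hx₂, rfl⟩⟩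
  exact ⟨x, hx, fun p hp => congrFun (congrArg Prod.fst hpair) ⟨p, hp⟩,
    fun p hp => congrFun (congrArg Prod.snd hpair) ⟨p, hp⟩⟩

theorem mul_patternCount_le_of_union_eq_mul [Finite A] {K K' P Q : Finset (ℤ × ℤ)}
    (h : patternCount U (K ∪ K') = patternCount U K * patternCount U K')
    (hP : P ⊆ K) (hQ : Q ⊆ K') :
    patternCount U P * patternCount U Q ≤ patternCount U (P ∪ Q) := by
  rw [patternCount_eq_ncard, patternCount_eq_ncard, patternCount_eq_ncard, ← Set.ncard_prod,
    ← Set.ncard_image_of_injective _ (restrictPair_injective P Q)]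
  refine Set.ncard_le_ncard ?_ (Set.toFinite _)
  rintro ⟨_, _⟩ ⟨⟨x₁, hx₁, rfl⟩, ⟨x₂, hx₂, rfl⟩⟩
  obtain ⟨x, hx, hx₁K, hx₂K'⟩ := exists_glue_of_patternCount_union_eq_mul h x₁ hx₁ x₂ hx₂
  exact ⟨fun p => x p, ⟨x, hx, rfl⟩, Prod.ext (funext fun p => hx₁K (hP p.2))
    (funext fun p => hx₂K' (hQ p.2))⟩

theorem patternCount_image_comp_equiv (U : Set ((ℤ × ℤ) → A)) (e : ℤ × ℤ ≃ ℤ × ℤ)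
    (L : Finset (ℤ × ℤ)) :
    patternCount ((· ∘ e) '' U) L = patternCount U (L.map e.toEmbedding) := by
  let relabel : (L.map e.toEmbedding → A) → (L → A) :=
    fun f p => f ⟨e p, Finset.mem_map_of_mem _ p.2⟩
  have hrelabel : Function.Injective relabel := by
    intro f g hfg
    funext ⟨q, hq⟩
    obtain ⟨p, hp, rfl⟩ := Finset.mem_map.1 hq
    exact congrFun hfg ⟨p, hp⟩
  rw [patternCount_eq_ncard, patternCount_eq_ncard,
    ← Set.ncard_image_of_injective _ hrelabel]
  simp only [patterns, Set.image_image]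
  rfl

theorem IsShiftInvariant.image_comp_addRight (hσ : IsShiftInvariant U) (v : ℤ × ℤ) :
    (· ∘ Equiv.addRight v) '' U = U := by
  refine Set.Subset.antisymm (Set.image_subset_iff.2 fun x hx => hσ v x hx) fun x hx => ?_
  refine ⟨fun p => x (p + -v), hσ (-v) x hx, funext fun p => ?_⟩
  simp

theorem IsShiftInvariant.patternCount_map_addRight (hσ : IsShiftInvariant U)
    (L : Finset (ℤ × ℤ)) (v : ℤ × ℤ) :
    patternCount U (L.map (Equiv.addRight v).toEmbedding) = patternCount U L := by
  rw [← patternCount_image_comp_equiv, hσ.image_comp_addRight]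

end Patterns

section Rectangles

theorem mem_Zrect {m n : ℕ} {c q : ℤ × ℤ} :
    q ∈ Zrect m n c ↔ c.1 ≤ q.1 ∧ q.1 < c.1 + m ∧ c.2 ≤ q.2 ∧ q.2 < c.2 + n := by
  simp only [Zrect, Finset.mem_image, Finset.mem_product, Finset.mem_range, Prod.ext_iff]
  constructor
  · rintro ⟨⟨a, b⟩, ⟨ha, hb⟩, h₁, h₂⟩
    omega
  · rintro ⟨h₁, h₂, h₃, h₄⟩
    exact ⟨((q.1 - c.1).toNat, (q.2 - c.2).toNat), ⟨by omega, by omega⟩, by omega, by omega⟩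

theorem card_Zrect (m n : ℕ) (c : ℤ × ℤ) : (Zrect m n c).card = m * n := by
  rw [Zrect, Finset.card_image_of_injective, Finset.card_product, Finset.card_range,
    Finset.card_range]
  rintro ⟨a, b⟩ ⟨a', b'⟩ h
  simp only [Prod.mk.injEq, add_right_inj, Nat.cast_inj] at h ⊢
  exact h

theorem Zrect_eq_map_addRight (m n : ℕ) (c : ℤ × ℤ) :
    Zrect m n c = (Zrect m n (0, 0)).map (Equiv.addRight c).toEmbedding := by
  ext q
  simp only [Finset.mem_map_equiv, Equiv.coe_addRight, Equiv.addRight_symm, mem_Zrect,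
    Prod.fst_add, Prod.snd_add, Prod.fst_neg, Prod.snd_neg]
  omega

theorem Zrect_map_prodComm (m n : ℕ) :
    (Zrect m n (0, 0)).map (Equiv.prodComm ℤ ℤ).toEmbedding = Zrect n m (0, 0) := by
  ext q
  simp only [Finset.mem_map_equiv, Equiv.prodComm_symm, Equiv.prodComm_apply, mem_Zrect,
    Prod.fst_swap, Prod.snd_swap]
  omega

theorem IsShiftInvariant.patternCount_Zrect {U : Set ((ℤ × ℤ) → A)} (hσ : IsShiftInvariant U)
    (m n : ℕ) (c : ℤ × ℤ) :
    patternCount U (Zrect m n c) = patternCount U (Zrect m n (0, 0)) := by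
  rw [Zrect_eq_map_addRight, hσ.patternCount_map_addRight]

end Rectangles

section Transpose

def transposeShift (U : Set ((ℤ × ℤ) → A)) : Set ((ℤ × ℤ) → A) :=
  (· ∘ Equiv.prodComm ℤ ℤ) '' U

variable {U : Set ((ℤ × ℤ) → A)}

theorem IsShiftInvariant.transposeShift (hσ : IsShiftInvariant U) :
    IsShiftInvariant (transposeShift U) := by
  rintro v _ ⟨x, hx, rfl⟩
  refine ⟨_, hσ v.swap x hx, funext fun p => ?_⟩
  simp [Prod.swap_add]

theorem patternCount_transposeShift_Zrect (U : Set ((ℤ × ℤ) → A)) (m n : ℕ) :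
    patternCount (transposeShift U) (Zrect m n (0, 0)) = patternCount U (Zrect n m (0, 0)) := by
  rw [transposeShift, patternCount_image_comp_equiv, Zrect_map_prodComm]

theorem rectEntropy_transposeShift (U : Set ((ℤ × ℤ) → A)) :
    rectEntropy (transposeShift U) = rectEntropy U := by
  rw [rectEntropy, ← (Equiv.prodComm ℕ ℕ).surjective.iInf_comp]
  simp only [patternCount_transposeShift_Zrect, Equiv.prodComm_apply, Prod.fst_swap,
    Prod.snd_swap, mul_comm]
  rfl

end Transpose

section Entropy

variable {U : Set ((ℤ × ℤ) → A)}

theorem rectEntropy_le [Finite A] (hne : U.Nonempty) {m n : ℕ} (hm : m ≠ 0) (hn : n ≠ 0) :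
    rectEntropy U ≤ (1 / ((m * n : ℕ) : ℝ)) * Real.log (patternCount U (Zrect m n (0, 0))) := by
  obtain ⟨m, rfl⟩ := Nat.exists_eq_succ_of_ne_zero hm
  obtain ⟨n, rfl⟩ := Nat.exists_eq_succ_of_ne_zero hn
  refine ciInf_le ⟨0, ?_⟩ (m, n)
  rintro _ ⟨mn, rfl⟩
  exact mul_nonneg (by positivity)
    (Real.log_nonneg (by exact_mod_cast one_le_patternCount hne _))

theorem mul_rectEntropy_le_log [Finite A] (hne : U.Nonempty) (m n : ℕ) :
    (m * n : ℝ) * rectEntropy U ≤ Real.log (patternCount U (Zrect m n (0, 0))) := by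
  have hlog_nonneg : 0 ≤ Real.log (patternCount U (Zrect m n (0, 0))) :=
    Real.log_nonneg (by exact_mod_cast one_le_patternCount hne _)
  rcases Nat.eq_zero_or_pos m with rfl | hm
  · simpa using hlog_nonneg
  rcases Nat.eq_zero_or_pos n with rfl | hn
  · simpa using hlog_nonneg
  have hmn : (0 : ℝ) < m * n := by positivity
  have h := rectEntropy_le hne hm.ne' hn.ne'
  rw [Nat.cast_mul, one_div, inv_mul_eq_div, le_div_iff₀ hmn] at h
  linarith

def RectEntropyAttained (U : Set ((ℤ × ℤ) → A)) (m n : ℕ) : Prop :=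
  Real.log (patternCount U (Zrect m n (0, 0))) = m * n * rectEntropy U

theorem rectEntropyAttained_iff {m n : ℕ} (hm : m ≠ 0) (hn : n ≠ 0) :
    RectEntropyAttained U m n ↔
      rectEntropy U = (1 / ((m * n : ℕ) : ℝ)) * Real.log (patternCount U (Zrect m n (0, 0))) := by
  have hmn : (m * n : ℝ) ≠ 0 := by positivity
  rw [RectEntropyAttained, Nat.cast_mul, one_div, inv_mul_eq_div, eq_div_iff hmn, eq_comm,
    mul_comm]

theorem rectEntropyAttained_transposeShift_iff {m n : ℕ} :
    RectEntropyAttained (transposeShift U) m n ↔ RectEntropyAttained U n m := by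
  rw [RectEntropyAttained, RectEntropyAttained, patternCount_transposeShift_Zrect,
    rectEntropy_transposeShift, mul_comm (m : ℝ)]

end Entropy

section Attained

variable [Finite A] {U : Set ((ℤ × ℤ) → A)}

theorem RectEntropyAttained.patternCount_Zrect_union (hne : U.Nonempty) (hσ : IsShiftInvariant U)
    {m n : ℕ} (h : RectEntropyAttained U m n) :
    patternCount U (Zrect m n (0, 0) ∪ Zrect m n (m, 0)) =
      patternCount U (Zrect m n (0, 0)) * patternCount U (Zrect m n (m, 0)) := by
  refine le_antisymm (patternCount_union_le U _ _) ?_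
  have hunion : Zrect m n (0, 0) ∪ Zrect m n (m, 0) = Zrect (m + m) n (0, 0) := by
    ext q
    simp only [Finset.mem_union, mem_Zrect]
    omega
  have hpos : (0 : ℝ) < patternCount U (Zrect m n (0, 0)) := by
    exact_mod_cast one_le_patternCount hne _
  have hpos₂ : (0 : ℝ) < patternCount U (Zrect (m + m) n (0, 0)) := by
    exact_mod_cast one_le_patternCount hne _
  have hdouble := mul_rectEntropy_le_log hne (m + m) n
  rw [hunion, hσ.patternCount_Zrect m n (m, 0), ← Nat.cast_le (α := ℝ), Nat.cast_mul,
    ← Real.log_le_log_iff (mul_pos hpos hpos) hpos₂, Real.log_mul hpos.ne' hpos.ne', h]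
  push_cast at hdouble
  linarith

theorem RectEntropyAttained.of_le_left (hne : U.Nonempty) (hσ : IsShiftInvariant U)
    {m n s : ℕ} (h : RectEntropyAttained U m n) (hs : s ≤ m) : RectEntropyAttained U s n := by
  have hglue : patternCount U (Zrect (m - s) n (s, 0)) * patternCount U (Zrect s n (m, 0)) ≤
      patternCount U (Zrect (m - s) n (s, 0) ∪ Zrect s n (m, 0)) := by
    refine mul_patternCount_le_of_union_eq_mul (h.patternCount_Zrect_union hne hσ) ?_ ?_ <;>
    · intro q
      simp only [mem_Zrect]
      omega
  have hsplit : Zrect (m - s) n (s, 0) ∪ Zrect s n (m, 0) = Zrect m n (s, 0) := by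
    ext q
    simp only [Finset.mem_union, mem_Zrect]
    omega
  rw [hsplit, hσ.patternCount_Zrect (m - s) n (s, 0), hσ.patternCount_Zrect s n (m, 0),
    hσ.patternCount_Zrect m n (s, 0)] at hglue
  have hpos₁ : (0 : ℝ) < patternCount U (Zrect (m - s) n (0, 0)) := by
    exact_mod_cast one_le_patternCount hne _
  have hpos₂ : (0 : ℝ) < patternCount U (Zrect s n (0, 0)) := by
    exact_mod_cast one_le_patternCount hne _
  have hsum : Real.log (patternCount U (Zrect (m - s) n (0, 0))) +
      Real.log (patternCount U (Zrect s n (0, 0))) ≤ m * n * rectEntropy U := by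
    rw [← h, ← Real.log_mul hpos₁.ne' hpos₂.ne']
    exact Real.log_le_log (by positivity) (by exact_mod_cast hglue)
  have hlow₁ := mul_rectEntropy_le_log hne (m - s) n
  have hlow₂ := mul_rectEntropy_le_log hne s n
  rw [Nat.cast_sub hs] at hlow₁
  unfold RectEntropyAttained
  linarith

theorem RectEntropyAttained.one_one (hne : U.Nonempty) (hσ : IsShiftInvariant U) {m n : ℕ}
    (h : RectEntropyAttained U m n) (hm : 1 ≤ m) (hn : 1 ≤ n) : RectEntropyAttained U 1 1 := by
  have h₁ : RectEntropyAttained (transposeShift U) n 1 :=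
    rectEntropyAttained_transposeShift_iff.2 (h.of_le_left hne hσ hm)
  exact rectEntropyAttained_transposeShift_iff.1
    (h₁.of_le_left (hne.image _) hσ.transposeShift hn)

end Attained

section FullShift

variable {U : Set ((ℤ × ℤ) → A)}

def symbols (U : Set ((ℤ × ℤ) → A)) : Set A :=
  (fun x => x (0, 0)) '' U

theorem IsShiftInvariant.apply_mem_symbols (hσ : IsShiftInvariant U) {x : (ℤ × ℤ) → A}
    (hx : x ∈ U) (p : ℤ × ℤ) : x p ∈ symbols U :=
  ⟨fun q => x (q + p), hσ p x hx, congrArg x (zero_add p)⟩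

theorem patternCount_Zrect_one_one (U : Set ((ℤ × ℤ) → A)) :
    patternCount U (Zrect 1 1 (0, 0)) = (symbols U).ncard := by
  have horigin : ((0 : ℤ), (0 : ℤ)) ∈ Zrect 1 1 (0, 0) := mem_Zrect.2 (by omega)
  have hinj : Function.Injective fun f : Zrect 1 1 (0, 0) → A => f ⟨(0, 0), horigin⟩ := by
    intro f g hfg
    funext ⟨q, hq⟩
    obtain rfl : q = (0, 0) := by
      rw [mem_Zrect] at hq
      ext <;> omega
    exact hfg
  rw [patternCount_eq_ncard, ← Set.ncard_image_of_injective _ hinj, patterns, Set.image_image]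
  rfl

theorem ncard_setOf_forall_mem (L : Finset (ℤ × ℤ)) (B : Set A) :
    {f : L → A | ∀ p, f p ∈ B}.ncard = B.ncard ^ L.card := by
  rw [← Nat.card_coe_set_eq, ← Nat.card_coe_set_eq, Set.coe_ofPred,
    Nat.card_congr Equiv.subtypePiEquivPi, Nat.card_fun, Nat.card_eq_finsetCard]

theorem IsShiftInvariant.patterns_subset (hσ : IsShiftInvariant U) (L : Finset (ℤ × ℤ)) :
    patterns U L ⊆ {f | ∀ p, f p ∈ symbols U} := by
  rintro _ ⟨x, hx, rfl⟩ p
  exact hσ.apply_mem_symbols hx p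

theorem RectEntropyAttained.patterns_Zrect_eq [Finite A] (hne : U.Nonempty)
    (hσ : IsShiftInvariant U) (h : RectEntropyAttained U 1 1) (m n : ℕ) (c : ℤ × ℤ) :
    patterns U (Zrect m n c) = {f | ∀ p, f p ∈ symbols U} := by
  refine Set.eq_of_subset_of_ncard_le (hσ.patterns_subset _) ?_ (Set.toFinite _)
  have hsymbols : 1 ≤ (symbols U).ncard :=
    patternCount_Zrect_one_one U ▸ one_le_patternCount hne _
  have hlow := mul_rectEntropy_le_log hne m n
  rw [RectEntropyAttained, patternCount_Zrect_one_one, Nat.cast_one, one_mul, one_mul] at h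
  rw [ncard_setOf_forall_mem, card_Zrect, ← patternCount_eq_ncard, hσ.patternCount_Zrect,
    ← Nat.cast_le (α := ℝ), ← Real.log_le_log_iff (by positivity)
      (by exact_mod_cast one_le_patternCount hne _), Nat.cast_pow, Real.log_pow, h]
  exact_mod_cast hlow

theorem IsClosed.mem_of_forall_mem_patterns [TopologicalSpace A] (hcl : IsClosed U)
    {L : ℕ → Finset (ℤ × ℤ)} (hL : ∀ p, ∀ᶠ k in atTop, p ∈ L k) {y : (ℤ × ℤ) → A}
    (hy : ∀ k, (fun p : L k => y p) ∈ patterns U (L k)) : y ∈ U := by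
  choose x hxU hxy using hy
  have hlim : Tendsto x atTop (nhds y) := tendsto_pi_nhds.2 fun p =>
    tendsto_const_nhds.congr' ((hL p).mono fun k hk => (congrFun (hxy k) ⟨p, hk⟩).symm)
  exact hcl.mem_of_tendsto hlim (Eventually.of_forall hxU)

theorem eventually_mem_Zrect_centered (p : ℤ × ℤ) :
    ∀ᶠ k : ℕ in atTop, p ∈ Zrect (2 * k + 1) (2 * k + 1) (-k, -k) :=
  eventually_atTop.2 ⟨p.1.natAbs + p.2.natAbs, fun k hk => mem_Zrect.2 (by omega)⟩

theorem IsShiftSpace.isFullShift_of_rectEntropyAttained [Finite A] [TopologicalSpace A]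
    (hU : IsShiftSpace U) {m n : ℕ} (h : RectEntropyAttained U m n) (hm : 1 ≤ m) (hn : 1 ≤ n) :
    IsFullShift U := by
  have hσ := hU.isShiftInvariant
  have h₁ := h.one_one hU.1 hσ hm hn
  refine ⟨symbols U, Set.Subset.antisymm (fun x hx p => hσ.apply_mem_symbols hx p) ?_⟩
  intro y hy
  refine hU.2.1.mem_of_forall_mem_patterns eventually_mem_Zrect_centered fun k => ?_
  rw [h₁.patterns_Zrect_eq hU.1 hσ]
  exact fun p => hy p

end FullShift

end ShiftSpaces

theorem isFullShift_of_rectEntropy_attained_general {A : Type*} [Fintype A] [TopologicalSpace A]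
    (U : Set ((ℤ × ℤ) → A)) (hU : IsShiftSpace U) :
    (∀ m n : ℕ, 1 ≤ m → 1 ≤ n →
        rectEntropy U = (1 / ((m * n : ℕ) : ℝ)) * Real.log (patternCount U (Zrect m n (0, 0))) →
        IsFullShift U) ∧
      (¬ IsFullShift U → ∀ m n : ℕ, 1 ≤ m → 1 ≤ n →
        rectEntropy U < (1 / ((m * n : ℕ) : ℝ)) * Real.log (patternCount U (Zrect m n (0, 0)))) := by
  have attained : ∀ m n : ℕ, 1 ≤ m → 1 ≤ n →
      rectEntropy U = (1 / ((m * n : ℕ) : ℝ)) * Real.log (patternCount U (Zrect m n (0, 0))) →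
      IsFullShift U := fun m n hm hn h =>
    hU.isFullShift_of_rectEntropyAttained ((rectEntropyAttained_iff (by omega) (by omega)).2 h)
      hm hn
  exact ⟨attained, fun hnot m n hm hn =>
    (rectEntropy_le hU.1 (by omega) (by omega)).lt_of_ne fun h => hnot (attained m n hm hn h)⟩

/-- Proposition 2.2: if `h_r(U) = (1/(mn)) log Γ_{m×n}(U)` for some
`m,n ≥ 1`, then `U` is a full shift; in particular, if `U` is not a full shift then
`h_r(U) < (1/(mn)) log Γ_{m×n}(U)` for every `m,n ≥ 1`. -/
theorem isFullShift_of_rectEntropy_attained {A : Type*} [Fintype A] [TopologicalSpace A]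
    [DiscreteTopology A] (hcard : 2 ≤ Fintype.card A)
    (U : Set ((ℤ × ℤ) → A)) (hU : IsShiftSpace U) :
    (∀ m n : ℕ, 1 ≤ m → 1 ≤ n →
        rectEntropy U = (1 / ((m * n : ℕ) : ℝ)) * Real.log (patternCount U (Zrect m n (0, 0))) →
        IsFullShift U) ∧
      (¬ IsFullShift U → ∀ m n : ℕ, 1 ≤ m → 1 ≤ n →
        rectEntropy U < (1 / ((m * n : ℕ) : ℝ)) * Real.log (patternCount U (Zrect m n (0, 0)))) :=
  isFullShift_of_rectEntropy_attained_general U hU
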